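/- arXiv:1502.05158 — 4 statements merged into one kernel-verified Lean document; each statement's English description precedes it below -/
import Mathlib

section
/- If F is real-analytic near 0 with F(0)=0, F'(0)=0, F''(0)=0 and F is not identically F(0) near 0, then the improper integral ∫₀^ε √(u/(F(0)-F(u))) du diverges for every sufficiently small ε>0 for which the integrand is defined, i.e., the integral is +∞. -/
/-!
Since `F'(0) = F''(0) = 0`, the analytic function `F(0) - F` vanishes to order at least three
at `0`, so `0 < F(0) - F(u) ≤ C u³` for small `u > 0`. Then `√(u / (F(0) - F(u))) ≥ 1 / (√C u)`,
and `1 / u` is not integrable at `0⁺`; in particular the integral diverges for every `ε > 0`.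
-/

open MeasureTheory Set Filter Topology Asymptotics

theorem AnalyticAt.isBigO_sub_pow_of_iteratedDeriv_eq_zero {𝕜 E : Type*}
    [NontriviallyNormedField 𝕜] [CharZero 𝕜] [NormedAddCommGroup E] [NormedSpace 𝕜 E]
    [CompleteSpace E] {f : 𝕜 → E} {x : 𝕜} {n : ℕ} (hf : AnalyticAt 𝕜 f x)
    (h : ∀ i < n, iteratedDeriv i f x = 0) :
    f =O[𝓝 x] fun z => (z - x) ^ n := by
  obtain ⟨g, hg, hfg⟩ := (natCast_le_analyticOrderAt hf).mp
    ((natCast_le_analyticOrderAt_iff_iteratedDeriv_eq_zero hf).mpr h)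
  have := (isBigO_refl (fun z => (z - x) ^ n) (𝓝 x)).smul
    (hg.continuousAt.tendsto.isBigO_one (F := 𝕜))
  simpa only [smul_eq_mul, mul_one] using
    this.congr' (hfg.mono fun z hz => hz.symm) EventuallyEq.rfl

theorem not_integrableOn_Ioo_zero_of_inv_isBigO {E : Type*} [NormedAddCommGroup E] {f : ℝ → E}
    {ε : ℝ} (hε : 0 < ε) (hf : (fun u : ℝ => u⁻¹) =O[𝓝[>] 0] f) :
    ¬ IntegrableOn f (Ioo 0 ε) := by
  intro hint
  obtain ⟨c, hc⟩ := hf.bound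
  obtain ⟨δ', hδ', hbound⟩ := (nhdsGT_basis (0 : ℝ)).eventually_iff.mp hc
  set δ := min ε δ'
  have hδ : 0 < δ := lt_min hε hδ'
  have hinv : IntegrableOn (fun u : ℝ => u⁻¹) (Ioo 0 δ) :=
    ((hint.mono_set (Ioo_subset_Ioo_right (min_le_left _ _))).norm.const_mul c).mono'
      measurable_inv.aestronglyMeasurable
      ((ae_restrict_mem measurableSet_Ioo).mono
        fun u hu => hbound (Ioo_subset_Ioo_right (min_le_right _ _) hu))
  have := (intervalIntegrable_iff_integrableOn_Ioo_of_le hδ.le).mpr hinv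
  simp [hδ.ne, hδ.le] at this

theorem inv_le_sqrt_mul_sqrt_div_of_le_mul_pow_three {u G C : ℝ} (hu : 0 < u) (hG : 0 < G)
    (hGC : G ≤ C * u ^ 3) : u⁻¹ ≤ √C * √(u / G) := by
  have hC : 0 < C := pos_of_mul_pos_left (hG.trans_le hGC) (by positivity)
  rw [← Real.sqrt_mul hC.le, Real.le_sqrt (by positivity) (by positivity), inv_pow,
    mul_div_assoc', le_div_iff₀ hG, inv_mul_le_iff₀ (by positivity)]
  linarith

theorem stmt2_general (F : ℝ → ℝ) (hF : AnalyticAt ℝ F 0)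
    (h1 : deriv F 0 = 0) (h2 : iteratedDeriv 2 F 0 = 0)
    (hpos : ∀ᶠ u in nhdsWithin 0 (Ioi 0), F u < F 0) :
    ∃ ε₀ > 0, ∀ ε : ℝ, 0 < ε → ε ≤ ε₀ →
      ¬ IntegrableOn (fun u => Real.sqrt (u / (F 0 - F u))) (Ioo 0 ε) := by
  have hcubic : (fun u => F 0 - F u) =O[𝓝 0] fun u => u ^ 3 := by
    simpa using (analyticAt_const.fun_sub hF).isBigO_sub_pow_of_iteratedDeriv_eq_zero
      fun i hi => by interval_cases i <;> simp [iteratedDeriv_const_sub, h1, h2]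
  obtain ⟨C, hC⟩ := hcubic.bound
  have hinv : (fun u : ℝ => u⁻¹) =O[𝓝[>] 0] fun u => √(u / (F 0 - F u)) := by
    refine .of_bound √C ?_
    filter_upwards [hpos, nhdsWithin_le_nhds hC, self_mem_nhdsWithin] with u hFu hCu hu
    have hu : 0 < u := hu
    have hG : 0 < F 0 - F u := sub_pos.mpr hFu
    rw [Real.norm_of_nonneg hG.le, Real.norm_of_nonneg (by positivity)] at hCu
    rw [Real.norm_of_nonneg (by positivity), Real.norm_of_nonneg (Real.sqrt_nonneg _)]
    exact inv_le_sqrt_mul_sqrt_div_of_le_mul_pow_three hu hG hCu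
  exact ⟨1, one_pos, fun ε hε _ => not_integrableOn_Ioo_zero_of_inv_isBigO hε hinv⟩

/-- If F is real-analytic near 0 with F(0)=0, F'(0)=0, F''(0)=0 and F not identically
F(0) near 0 (with F(0)-F(u)>0 for small u>0 so the integrand is defined), then the
improper integral ∫₀^ε √(u/(F(0)-F(u))) du diverges for every sufficiently small ε>0. -/
theorem stmt2 (F : ℝ → ℝ) (hF : AnalyticAt ℝ F 0) (h0 : F 0 = 0)
    (h1 : deriv F 0 = 0) (h2 : iteratedDeriv 2 F 0 = 0)
    (hnc : ¬ (∀ᶠ u in nhds 0, F u = F 0))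
    (hpos : ∀ᶠ u in nhdsWithin 0 (Ioi 0), F u < F 0) :
    ∃ ε₀ > 0, ∀ ε : ℝ, 0 < ε → ε ≤ ε₀ →
      ¬ IntegrableOn (fun u => Real.sqrt (u / (F 0 - F u))) (Ioo 0 ε) :=
  stmt2_general F hF h1 h2 hpos
end

section
/- Let F be real-analytic near m>0 with F'(m)=0 and F(u)<F(m) for u in (m-ε₀,m). Then the improper integral ∫_{m-ε}^{m} √(u/(F(m)-F(u))) du diverges (equals +∞) for all sufficiently small ε>0. -/
/-!
Analyticity and `F'(m) = 0` give `F m - F u = O((u - m)²)`, so just left of `m` the integrand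
`√(u / (F m - F u))` is bounded below by `c / (m - u)` for some `c > 0`, and `1 / (m - u)` is not
integrable at `m`.
-/

open MeasureTheory Set Filter Topology Asymptotics

theorem AnalyticAt.isBigO_sub_sq_of_deriv_eq_zero {𝕜 E : Type*} [NontriviallyNormedField 𝕜]
    [NormedAddCommGroup E] [NormedSpace 𝕜 E] {F : 𝕜 → E} {m : 𝕜}
    (hF : AnalyticAt 𝕜 F m) (hd : deriv F m = 0) :
    (fun z => F z - F m) =O[𝓝 m] fun z => ‖z - m‖ ^ 2 := by
  obtain ⟨p, hp⟩ := hF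
  have hquad : ∀ y, p.partialSum 2 y = F m := by
    intro y
    have hp0 : p.coeff 0 = F m := hp.coeff_zero _
    have hp1 : p.coeff 1 = 0 := hp.deriv.symm.trans hd
    simp [FormalMultilinearSeries.partialSum, Finset.sum_range_succ, hp0, hp1]
  have hshift : Tendsto (fun z => z - m) (𝓝 m) (𝓝 0) := by
    simpa using (continuous_sub_right m).tendsto m
  simpa [Function.comp_def, hquad] using (hp.isBigO_sub_partialSum_pow 2).comp_tendsto hshift

theorem not_integrableOn_Ioo_inv_sub {a m : ℝ} (ham : a < m) :
    ¬ IntegrableOn (fun u => (m - u)⁻¹) (Ioo a m) := by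
  intro h
  have hneg : IntervalIntegrable (fun u => (u - m)⁻¹) volume a m := by
    rw [intervalIntegrable_iff_integrableOn_Ioo_of_le ham.le]
    have hflip : (fun u => (u - m)⁻¹) = fun u => -(m - u)⁻¹ := by
      ext u; rw [← neg_sub, inv_neg]
    rw [hflip]
    exact h.neg
  rcases intervalIntegrable_sub_inv_iff.1 hneg with h | h
  · exact ham.ne h
  · exact h right_mem_uIcc

theorem not_integrableOn_of_const_mul_inv_sub_le {g : ℝ → ℝ} {a m c : ℝ} (ham : a < m)
    (hc : 0 < c) (hg : ∀ u ∈ Ioo a m, c * (m - u)⁻¹ ≤ g u) :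
    ¬ IntegrableOn g (Ioo a m) := by
  intro h
  refine not_integrableOn_Ioo_inv_sub ham ?_
  have hcg : IntegrableOn (fun u => c * (m - u)⁻¹) (Ioo a m) := by
    refine h.mono' (by fun_prop) ((ae_restrict_iff' measurableSet_Ioo).2 (ae_of_all _ ?_))
    intro u hu
    have : 0 < m - u := sub_pos.2 hu.2
    rw [Real.norm_of_nonneg (by positivity)]
    exact hg u hu
  simpa [IntegrableOn, ← mul_assoc, hc.ne'] using hcg.const_mul c⁻¹

theorem eventually_const_mul_inv_sub_le_sqrt_div {F : ℝ → ℝ} {m : ℝ} (hm : 0 < m)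
    (hF : AnalyticAt ℝ F m) (hd : deriv F m = 0) (hlt : ∀ᶠ u in 𝓝[<] m, F u < F m) :
    ∃ c > 0, ∀ᶠ u in 𝓝[<] m, c * (m - u)⁻¹ ≤ √(u / (F m - F u)) := by
  obtain ⟨C, hC⟩ := (hF.isBigO_sub_sq_of_deriv_eq_zero hd).bound
  set C' := max C 1
  have hC' : 0 < C' := lt_max_of_lt_right one_pos
  have hhalf : ∀ᶠ u in 𝓝 m, m / 2 < u := eventually_gt_nhds (by linarith)
  refine ⟨√(m / 2 / C'), Real.sqrt_pos.2 (by positivity), ?_⟩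
  filter_upwards [nhdsWithin_le_nhds hC, nhdsWithin_le_nhds hhalf, hlt, self_mem_nhdsWithin]
    with u hbound hu2 hFu hum
  have hmu : 0 < m - u := sub_pos.2 hum
  have hsq : F m - F u ≤ C' * (m - u) ^ 2 := by
    simp only [Real.norm_eq_abs, abs_pow, sq_abs] at hbound
    calc F m - F u ≤ |F u - F m| := by rw [← neg_sub]; exact neg_le_abs _
      _ ≤ C * (u - m) ^ 2 := hbound
      _ ≤ C' * (m - u) ^ 2 := by
        rw [← neg_sub, neg_sq]; exact mul_le_mul_of_nonneg_right (le_max_left _ _) (sq_nonneg _)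
  calc √(m / 2 / C') * (m - u)⁻¹ = √(m / 2 / C' * ((m - u)⁻¹) ^ 2) := by
        rw [Real.sqrt_mul' _ (sq_nonneg _), Real.sqrt_sq (inv_nonneg.2 hmu.le)]
    _ = √(m / 2 / (C' * (m - u) ^ 2)) := by rw [inv_pow, ← div_eq_mul_inv, div_div]
    _ ≤ √(u / (F m - F u)) :=
        Real.sqrt_le_sqrt (div_le_div₀ (by linarith) hu2.le (sub_pos.2 hFu) hsq)

theorem stmt4_general (F : ℝ → ℝ) (m ε₀ : ℝ) (hm : 0 < m) (hF : AnalyticAt ℝ F m)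
    (hd : deriv F m = 0) (hε₀ : 0 < ε₀)
    (hlt : ∀ u ∈ Ioo (m - ε₀) m, F u < F m) :
    ∃ ε₁ > 0, ∀ ε : ℝ, 0 < ε → ε ≤ ε₁ →
      ¬ IntegrableOn (fun u => Real.sqrt (u / (F m - F u))) (Ioo (m - ε) m) := by
  have hlt_left : ∀ᶠ u in 𝓝[<] m, F u < F m :=
    eventually_of_mem (Ioo_mem_nhdsLT (by linarith)) hlt
  obtain ⟨c, hc, hbound⟩ := eventually_const_mul_inv_sub_le_sqrt_div hm hF hd hlt_left
  obtain ⟨l, hl, hsub⟩ := mem_nhdsLT_iff_exists_Ioo_subset.1 hbound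
  refine ⟨m - l, sub_pos.2 hl, fun ε hε hεle => ?_⟩
  exact not_integrableOn_of_const_mul_inv_sub_le (by linarith) hc
    fun u hu => hsub (Ioo_subset_Ioo_left (by linarith) hu)

/-- Let F be real-analytic and non-constant near m>0 with F'(m)=0 and F(u)<F(m) for u in
(m-ε₀,m). Then the improper integral ∫_{m-ε}^{m} √(u/(F(m)-F(u))) du diverges for all
sufficiently small ε>0. -/
theorem stmt4 (F : ℝ → ℝ) (m ε₀ : ℝ) (hm : 0 < m) (hF : AnalyticAt ℝ F m)
    (hd : deriv F m = 0) (hε₀ : 0 < ε₀)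
    (hnc : ¬ (∀ᶠ u in nhds m, F u = F m))
    (hlt : ∀ u ∈ Ioo (m - ε₀) m, F u < F m) :
    ∃ ε₁ > 0, ∀ ε : ℝ, 0 < ε → ε ≤ ε₁ →
      ¬ IntegrableOn (fun u => Real.sqrt (u / (F m - F u))) (Ioo (m - ε) m) :=
  stmt4_general F m ε₀ hm hF hd hε₀ hlt
end

section
/- Let F(w) = A·w + B·w² - (a/6)w³ with a<0 and suppose F'(0) = A < 0. Then there is no m>0 such that F(m)=F(0), F(u)<F(0) for all u∈(0,m), and F'(m)=0. (Hence the generalized Camassa–Holm equation with a<0 admits no peaked solitary traveling wave.) -/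
/-! `F(m) = F(0) = 0` and `F'(m) = 0` make `m ≠ 0` a double root of the cubic `F`, which also
vanishes at `0`; hence `F(w) = -(a/6) w (w - m)²` and `A = F'(0) = -(a/6) m² > 0`. -/

open Set

theorem hasDerivAt_cubic (A B d x : ℝ) :
    HasDerivAt (fun w => A * w + B * w ^ 2 - d * w ^ 3) (A + 2 * B * x - 3 * d * x ^ 2) x :=
  ((((hasDerivAt_id' x).const_mul A).add ((hasDerivAt_pow 2 x).const_mul B)).sub
    ((hasDerivAt_pow 3 x).const_mul d)).congr_deriv (by norm_num; ring)

theorem cubic_linear_coeff_eq_of_double_root {A B d m : ℝ} (hm : m ≠ 0)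
    (hroot : A * m + B * m ^ 2 - d * m ^ 3 = 0) (hcrit : A + 2 * B * m - 3 * d * m ^ 2 = 0) :
    A = -d * m ^ 2 := by
  have hB : B = 2 * d * m := by
    apply mul_left_cancel₀ (pow_ne_zero 2 hm)
    linear_combination hcrit * m - hroot
  subst hB
  apply mul_left_cancel₀ hm
  linear_combination hroot

/-- For F(w)=Aw+Bw²-(a/6)w³ with a<0 and F'(0)=A<0, there is no m>0 with F(m)=F(0),
F<F(0) on (0,m) and F'(m)=0; hence the generalized Camassa–Holm equation with a≤0 has no
peaked solitary traveling wave. -/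
theorem stmt16 (a A B : ℝ) (ha : a < 0) (hA : A < 0)
    (F : ℝ → ℝ) (hF : F = fun w => A * w + B * w^2 - (a/6) * w^3) :
    ¬ ∃ m > 0, F m = F 0 ∧ (∀ u ∈ Ioo 0 m, F u < F 0) ∧ deriv F m = 0 := by
  rintro ⟨m, hm, hroot, -, hcrit⟩
  subst hF
  rw [(hasDerivAt_cubic A B (a / 6) m).deriv] at hcrit
  have hA_eq := cubic_linear_coeff_eq_of_double_root hm.ne' (by simpa using hroot) hcrit
  nlinarith [pow_pos hm 2]
end

section
/- Suppose F is continuous with F(0)=0, and there exist m>0 with F(m)=0 and F(u)<0 for all u∈(0,m), and F'(0)<0, F'(m)≠0 (F differentiable at 0 and m). Define T = √2·∫₀^m √(u/(-F(u))) du. Then T is finite and positive. -/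
/-!
Since `F` vanishes at `0` and `m` with nonzero derivatives there, `u * (m - u) / -F u` tends to
finite limits at both ends of `(0, m)`, so it is bounded there. Hence `√(u / -F u)`, which equals
`√(u * (m - u) / -F u) * (m - u) ^ (-1/2)`, is dominated by a multiple of the integrable
`(m - u) ^ (-1/2)`; being positive on `(0, m)`, it has positive integral.
-/

open MeasureTheory Set Filter Topology

theorem HasDerivAt.tendsto_sub_div_of_eq_zero {𝕜 : Type*} [NontriviallyNormedField 𝕜]
    {F : 𝕜 → 𝕜} {F' a : 𝕜} (hF : HasDerivAt F F' a) (ha : F a = 0) (hF' : F' ≠ 0) :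
    Tendsto (fun u => (u - a) / F u) (𝓝[≠] a) (𝓝 F'⁻¹) := by
  convert hF.tendsto_slope.inv₀ hF' using 2 with u
  rw [slope_def_field, ha, sub_zero, inv_div]

theorem bddAbove_image_Ioo_of_tendsto {α β : Type*} [ConditionallyCompleteLinearOrder α]
    [TopologicalSpace α] [OrderTopology α] [DenselyOrdered α] [LinearOrder β]
    [TopologicalSpace β] [OrderTopology β] {f : α → β} {a b : α} {la lb : β}
    (hf : ContinuousOn f (Ioo a b)) (ha : Tendsto f (𝓝[>] a) (𝓝 la))
    (hb : Tendsto f (𝓝[<] b) (𝓝 lb)) : BddAbove (f '' Ioo a b) := by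
  have hext : EqOn (extendFrom (Ioo a b) f) f (Ioo a b) := extendFrom_extends hf
  have : Nonempty β := ⟨la⟩
  refine ((isCompact_Icc.bddAbove_image (continuousOn_Icc_extendFrom_Ioo hf ha hb)).mono ?_)
  rw [← hext.image_eq]
  exact image_mono Ioo_subset_Icc_self

theorem integrableOn_Ioo_sub_rpow {r : ℝ} (hr : -1 < r) (a b : ℝ) :
    IntegrableOn (fun u : ℝ => (b - u) ^ r) (Ioo a b) := by
  have h := ((intervalIntegral.intervalIntegrable_rpow' hr (a := 0) (b := b - a)).comp_sub_left b)
  simp only [sub_zero, sub_sub_cancel] at h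
  exact (intervalIntegrable_iff.mp h.symm).mono_set (Ioo_subset_Ioc_self.trans Ioc_subset_uIoc)

theorem setIntegral_Ioo_pos {f : ℝ → ℝ} {a b : ℝ} (hab : a < b) (hf : IntegrableOn f (Ioo a b))
    (hpos : ∀ x ∈ Ioo a b, 0 < f x) : 0 < ∫ x in Ioo a b, f x := by
  rw [← integral_Ioc_eq_integral_Ioo, ← intervalIntegral.integral_of_le hab.le]
  exact intervalIntegral.intervalIntegral_pos_of_pos_on
    ((intervalIntegrable_iff_integrableOn_Ioo_of_le hab.le).mpr hf) hpos hab

theorem continuousOn_Ioo_mul_sub_div_neg {F : ℝ → ℝ} {m : ℝ} (hcont : ContinuousOn F (Icc 0 m))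
    (hneg : ∀ u ∈ Ioo 0 m, F u < 0) : ContinuousOn (fun u => u * (m - u) / -F u) (Ioo 0 m) :=
  (continuousOn_id.mul (continuousOn_const.sub continuousOn_id)).div
    (hcont.mono Ioo_subset_Icc_self).neg fun u hu => (neg_pos.mpr (hneg u hu)).ne'

theorem bddAbove_image_Ioo_mul_sub_div_neg {F : ℝ → ℝ} {m : ℝ}
    (hcont : ContinuousOn F (Icc 0 m)) (h0 : F 0 = 0) (hFm : F m = 0)
    (hneg : ∀ u ∈ Ioo 0 m, F u < 0) {F₀ Fₘ : ℝ} (hd0 : HasDerivAt F F₀ 0)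
    (hdm : HasDerivAt F Fₘ m) (h1 : F₀ ≠ 0) (h2 : Fₘ ≠ 0) :
    BddAbove ((fun u => u * (m - u) / -F u) '' Ioo 0 m) := by
  have hlim0 : Tendsto (fun u => u * (m - u) / -F u) (𝓝[>] 0) (𝓝 (-(m - 0) * F₀⁻¹)) := by
    have := ((hd0.tendsto_sub_div_of_eq_zero h0 h1).mono_left (nhdsGT_le_nhdsNE 0))
    convert ((tendsto_const_nhds.sub tendsto_id).neg.mono_left nhdsWithin_le_nhds).mul this
      using 2 with u
    simp only [id, sub_zero]; ring
  have hlimm : Tendsto (fun u => u * (m - u) / -F u) (𝓝[<] m) (𝓝 (m * Fₘ⁻¹)) := by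
    have := ((hdm.tendsto_sub_div_of_eq_zero hFm h2).mono_left (nhdsLT_le_nhdsNE m))
    convert (tendsto_id.mono_left nhdsWithin_le_nhds).mul this using 2 with u
    simp only [id]; ring
  exact bddAbove_image_Ioo_of_tendsto (continuousOn_Ioo_mul_sub_div_neg hcont hneg) hlim0 hlimm

/-- If F is continuous on [0,m] with F(0)=0, F<0 on (0,m), F(m)=0, F differentiable at
0 and m with F'(0)<0 and F'(m)≠0, then T = √2·∫₀^m √(u/(-F u)) du is finite and
positive. -/
theorem stmt17 (F : ℝ → ℝ) (m : ℝ) (hm : 0 < m)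
    (hcont : ContinuousOn F (Icc 0 m)) (h0 : F 0 = 0) (hFm : F m = 0)
    (hneg : ∀ u ∈ Ioo 0 m, F u < 0)
    (hd0 : DifferentiableAt ℝ F 0) (hdm : DifferentiableAt ℝ F m)
    (h1 : deriv F 0 < 0) (h2 : deriv F m ≠ 0) :
    IntegrableOn (fun u => Real.sqrt (u / (-F u))) (Ioo 0 m) ∧
      0 < Real.sqrt 2 * ∫ u in Ioo 0 m, Real.sqrt (u / (-F u)) := by
  set φ : ℝ → ℝ := fun u => u * (m - u) / -F u
  obtain ⟨M, hM⟩ := bddAbove_image_Ioo_mul_sub_div_neg hcont h0 hFm hneg hd0.hasDerivAt hdm.hasDerivAt h1.ne h2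
  have hfactor : EqOn (fun u => √(φ u) * (m - u) ^ (-(1 / 2) : ℝ)) (fun u => √(u / -F u))
      (Ioo 0 m) := by
    intro u hu
    have hmu : 0 < m - u := sub_pos.mpr hu.2
    dsimp only [φ]
    rw [Real.rpow_neg hmu.le, ← Real.sqrt_eq_rpow, ← Real.sqrt_inv,
      ← Real.sqrt_mul' _ (inv_nonneg.mpr hmu.le)]
    congr 1
    field_simp
  have hbound : ∀ᵐ u ∂volume.restrict (Ioo 0 m), ‖√(φ u)‖ ≤ √M := by
    refine (ae_restrict_iff' measurableSet_Ioo).mpr (Eventually.of_forall fun u hu => ?_)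
    rw [Real.norm_of_nonneg (Real.sqrt_nonneg _)]
    exact Real.sqrt_le_sqrt (hM (mem_image_of_mem φ hu))
  have hint : IntegrableOn (fun u => √(u / -F u)) (Ioo 0 m) :=
    IntegrableOn.congr_fun ((integrableOn_Ioo_sub_rpow (r := -(1 / 2)) (by norm_num) 0 m).bdd_mul
      ((continuousOn_Ioo_mul_sub_div_neg hcont hneg).sqrt.aestronglyMeasurable measurableSet_Ioo)
      hbound) hfactor measurableSet_Ioo
  refine ⟨hint, mul_pos (by positivity) (setIntegral_Ioo_pos hm hint fun u hu => ?_)⟩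
  exact Real.sqrt_pos.mpr (div_pos hu.1 (neg_pos.mpr (hneg u hu)))
end
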